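/- The sigma function is a theta function for the lattice Λ = 2πiℤ + 2πiτℤ with γ(2πi(a + bτ)) = −b and c(λ) = 1 if λ ∈ 2Λ and c(λ) = −1 otherwise; explicitly, for all a, b ∈ ℤ and all z ∈ ℂ, σ(z + 2πi·(a + b·τ)) = (−1)^{a + b + a·b} · exp(−b·(z + πi·(a + b·τ))) · σ(z). -/

import Mathlib

/-!
In terms of q-Pochhammer symbols, with `q = e^{2πiτ}`,
`σ(z) = (e^{z/2} - e^{-z/2}) (q e^z; q)_∞ (q e^{-z}; q)_∞ / (q; q)_∞²`.
Translating `z` by `2πi` leaves the products unchanged and flips the sign of the prefactor.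
Translating `z` by `2πiτ` multiplies `e^z` by `q`, and `(w; q)_∞ = (1 - w) (w q; q)_∞` then gives
`σ(z + 2πiτ) = -e^{-z-πiτ} σ(z)`. Iterating the first relation is immediate; the second one is
iterated after multiplying `σ` by the Gaussian `e^{z²/(4πiτ)}`, which makes it antiperiodic.
-/

/-- The nome `q = exp(2πiτ)`. -/
noncomputable def nome (τ : ℂ) : ℂ := Complex.exp (2 * Real.pi * Complex.I * τ)

/-- The Weierstrass-type sigma function
`σ(z) = (e^{z/2} - e^{-z/2}) ∏_{n ≥ 1} (1 - qⁿ eᶻ)(1 - qⁿ e^{-z})/(1 - qⁿ)²`,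
where the product over integers `n ≥ 1` is encoded as a product over `n : ℕ`
with exponent `n + 1`. -/
noncomputable def wsigma (τ : ℂ) (z : ℂ) : ℂ :=
  (Complex.exp (z / 2) - Complex.exp (-z / 2)) *
    ∏' n : ℕ, ((1 - nome τ ^ (n + 1) * Complex.exp z) *
      (1 - nome τ ^ (n + 1) * Complex.exp (-z)) / (1 - nome τ ^ (n + 1)) ^ 2)

open Complex
open scoped Real

/-- The q-Pochhammer symbol `(w; q)_∞`. -/
noncomputable def qPochhammer (w q : ℂ) : ℂ := ∏' n : ℕ, (1 - w * q ^ n)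

section qPochhammer

variable {q : ℂ} (hq : ‖q‖ < 1)
include hq

lemma hasProd_qPochhammer (w : ℂ) :
    HasProd (fun n : ℕ => 1 - w * q ^ n) (qPochhammer w q) := by
  have hsum := ((summable_geometric_of_norm_lt_one hq).mul_left w).neg
  simpa only [qPochhammer, sub_eq_add_neg] using
    (Complex.multipliable_one_add_of_summable hsum).hasProd

lemma qPochhammer_eq_one_sub_mul (w : ℂ) :
    qPochhammer w q = (1 - w) * qPochhammer (w * q) q := by
  have hshift : (fun n : ℕ => 1 - w * q ^ (n + 1)) = fun n => 1 - w * q * q ^ n := by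
    funext n; ring
  have hmul : Multipliable fun n : ℕ => 1 - w * q ^ (n + 1) :=
    hshift ▸ (hasProd_qPochhammer hq (w * q)).multipliable
  rw [qPochhammer, tprod_eq_zero_mul' (f := fun n => 1 - w * q ^ n) hmul, hshift, pow_zero,
    mul_one, qPochhammer]

lemma qPochhammer_ne_zero {w : ℂ} (hw : ∀ n : ℕ, w * q ^ n ≠ 1) : qPochhammer w q ≠ 0 := by
  simpa only [qPochhammer, sub_eq_add_neg] using
    tprod_one_add_ne_zero_of_summable (f := fun n : ℕ => -(w * q ^ n))
      (fun n h => hw n (by linear_combination -h))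
      ((summable_geometric_of_norm_lt_one hq).mul_left w).neg.norm

end qPochhammer

lemma norm_nome_lt_one {τ : ℂ} (hτ : 0 < τ.im) : ‖nome τ‖ < 1 := by
  have hre : (2 * π * I * τ).re = -(2 * π * τ.im) := by simp
  rw [nome, norm_exp, hre, Real.exp_lt_one_iff, neg_lt_zero]
  positivity

lemma wsigma_eq_qPochhammer {τ : ℂ} (hτ : 0 < τ.im) (z : ℂ) :
    wsigma τ z = (exp (z / 2) - exp (-z / 2)) * qPochhammer (nome τ * exp z) (nome τ) *
      qPochhammer (nome τ * exp (-z)) (nome τ) / qPochhammer (nome τ) (nome τ) ^ 2 := by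
  have hq := norm_nome_lt_one hτ
  have hpoch_ne : qPochhammer (nome τ) (nome τ) ≠ 0 := by
    refine qPochhammer_ne_zero hq fun n h => ?_
    have := pow_lt_one₀ (norm_nonneg _) hq (Nat.succ_ne_zero n)
    rw [← norm_pow, pow_succ', h, norm_one] at this
    exact lt_irrefl _ this
  have hprod := ((hasProd_qPochhammer hq (nome τ * exp z)).mul
    (hasProd_qPochhammer hq (nome τ * exp (-z)))).div₀
    ((hasProd_qPochhammer hq (nome τ)).pow 2) (pow_ne_zero 2 hpoch_ne)
  rw [wsigma, mul_div_assoc, mul_assoc, ← mul_div_assoc, ← hprod.tprod_eq]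
  congr 2
  funext n
  ring

theorem wsigma_antiperiodic (τ : ℂ) : Function.Antiperiodic (wsigma τ) (2 * π * I) := by
  intro z
  have hexp : exp (z + 2 * π * I) = exp z := by rw [exp_add, exp_two_pi_mul_I, mul_one]
  have hexp_neg : exp (-(z + 2 * π * I)) = exp (-z) := by
    rw [neg_add, exp_add, exp_neg (2 * π * I), exp_two_pi_mul_I, inv_one, mul_one]
  have hhalf : exp ((z + 2 * π * I) / 2) = -exp (z / 2) := by
    rw [add_div, exp_add, show 2 * π * I / 2 = π * I by ring, exp_pi_mul_I]; ring
  have hhalf_neg : exp (-(z + 2 * π * I) / 2) = -exp (-z / 2) := by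
    rw [neg_add, add_div, exp_add, show -(2 * π * I) / 2 = -(π * I) by ring,
      exp_neg, exp_pi_mul_I]; ring
  rw [wsigma, wsigma, hexp, hexp_neg, hhalf, hhalf_neg]
  ring

theorem wsigma_add_two_pi_I_mul {τ : ℂ} (hτ : 0 < τ.im) (z : ℂ) :
    wsigma τ (z + 2 * (π * I * τ)) = -exp (-(z + π * I * τ)) * wsigma τ z := by
  have hq := norm_nome_lt_one hτ
  set q := nome τ with hq_def
  have hq0 : q ≠ 0 := exp_ne_zero _
  set u := exp (z / 2)
  set s := exp (π * I * τ)
  have hu : u ≠ 0 := exp_ne_zero _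
  have hs : s ≠ 0 := exp_ne_zero _
  have hqs : q = s ^ 2 := by rw [← exp_nat_mul, hq_def, nome]; ring_nf
  have hexp : exp z = u ^ 2 := by rw [← exp_nat_mul]; ring_nf
  have hexp_neg : exp (-z) = (u ^ 2)⁻¹ := by rw [exp_neg, hexp]
  have hshift : exp (z + 2 * (π * I * τ)) = exp z * q := by
    rw [exp_add, hq_def, nome]; ring_nf
  have hshift_neg : exp (-(z + 2 * (π * I * τ))) = exp (-z) * q⁻¹ := by
    rw [exp_neg, hshift, mul_inv, ← exp_neg]
  have hhalf : exp ((z + 2 * (π * I * τ)) / 2) = u * s := by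
    rw [← exp_add]; ring_nf
  have hhalf_neg : exp (-(z + 2 * (π * I * τ)) / 2) = (u * s)⁻¹ := by
    rw [neg_div, exp_neg, hhalf]
  have hexp_half_neg : exp (-z / 2) = u⁻¹ := by rw [neg_div, exp_neg]
  have hfactor : exp (-(z + π * I * τ)) = (u ^ 2 * s)⁻¹ := by
    rw [exp_neg, exp_add, hexp]
  have hpoch : qPochhammer (q * exp z) q = (1 - q * exp z) * qPochhammer (q * (exp z * q)) q := by
    rw [qPochhammer_eq_one_sub_mul hq, mul_assoc]
  have hpoch_neg : qPochhammer (q * (exp (-z) * q⁻¹)) q =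
      (1 - exp (-z)) * qPochhammer (q * exp (-z)) q := by
    rw [show q * (exp (-z) * q⁻¹) = exp (-z) by field_simp, qPochhammer_eq_one_sub_mul hq,
      mul_comm (exp (-z)) q]
  rw [wsigma_eq_qPochhammer hτ, wsigma_eq_qPochhammer hτ, hshift, hshift_neg, hpoch_neg, hpoch]
  generalize qPochhammer (q * (exp z * q)) q = A
  generalize qPochhammer (q * exp (-z)) q = B
  generalize qPochhammer q q = C
  rw [hhalf, hhalf_neg, hexp_half_neg, hfactor, hexp_neg, hexp, hqs]
  field_simp
  ring

lemma antiperiodic_exp_sq_mul {f : ℂ → ℂ} {c : ℂ} (hc : c ≠ 0)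
    (hf : ∀ z, f (z + 2 * c) = -exp (-(z + c)) * f z) :
    Function.Antiperiodic (fun z => exp (z ^ 2 / (4 * c)) * f z) (2 * c) := by
  intro z
  have hgauss : exp ((z + 2 * c) ^ 2 / (4 * c)) * exp (-(z + c)) = exp (z ^ 2 / (4 * c)) := by
    rw [← exp_add]; congr 1; field_simp; ring
  simp only [hf, ← hgauss]
  ring

lemma add_int_mul_eq_of_quasiperiodic {f : ℂ → ℂ} {c : ℂ} (hc : c ≠ 0)
    (hf : ∀ z, f (z + 2 * c) = -exp (-(z + c)) * f z) (n : ℤ) (z : ℂ) :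
    f (z + n * (2 * c)) = (-1) ^ n * exp (-n * (z + n * c)) * f z := by
  have h := (antiperiodic_exp_sq_mul hc hf).add_int_mul_eq (x := z) n
  rw [Int.cast_negOnePow] at h
  have hgauss : exp ((z + n * (2 * c)) ^ 2 / (4 * c)) * exp (-n * (z + n * c)) =
      exp (z ^ 2 / (4 * c)) := by
    rw [← exp_add]; congr 1; field_simp; ring
  apply mul_left_cancel₀ (exp_ne_zero ((z + n * (2 * c)) ^ 2 / (4 * c)))
  rw [h, ← hgauss]
  ring

theorem wsigma_theta_transformation (τ : ℂ) (hτ : 0 < τ.im) :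
    ∀ (a b : ℤ) (z : ℂ),
      wsigma τ (z + 2 * Real.pi * Complex.I * (a + b * τ)) =
        (-1 : ℂ) ^ (a + b + a * b) *
          Complex.exp (-b * (z + Real.pi * Complex.I * (a + b * τ))) * wsigma τ z := by
  intro a b z
  have hτ0 : τ ≠ 0 := fun h => by simp [h] at hτ
  have hc : π * I * τ ≠ 0 := by simp [Real.pi_ne_zero, hτ0]
  have hperiod := (wsigma_antiperiodic τ).add_int_mul_eq (x := z + b * (2 * (π * I * τ))) a
  rw [Int.cast_negOnePow] at hperiod
  have hquasi := add_int_mul_eq_of_quasiperiodic hc (wsigma_add_two_pi_I_mul hτ) b z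
  have hsign : exp (-(a * b : ℤ) * (π * I)) = (-1) ^ (-(a * b)) := by
    rw [← Int.cast_neg, exp_int_mul, exp_pi_mul_I]
  have hexp : exp (-b * (z + π * I * (a + b * τ))) =
      exp (-b * (z + b * (π * I * τ))) * exp (-(a * b : ℤ) * (π * I)) := by
    rw [← exp_add]; push_cast; ring_nf
  calc wsigma τ (z + 2 * π * I * (a + b * τ))
      = wsigma τ (z + b * (2 * (π * I * τ)) + a * (2 * π * I)) := by ring_nf
    _ = (-1) ^ a * ((-1) ^ b * exp (-b * (z + b * (π * I * τ))) * wsigma τ z) := by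
      rw [hperiod, hquasi]
    _ = (-1 : ℂ) ^ (a + b + a * b) * exp (-b * (z + π * I * (a + b * τ))) * wsigma τ z := by
      have hsigns : (-1 : ℂ) ^ (a + b + a * b) * (-1) ^ (-(a * b)) = (-1) ^ a * (-1) ^ b := by
        rw [← zpow_add₀ (by norm_num), ← zpow_add₀ (by norm_num)]; ring_nf
      rw [hexp, hsign]
      linear_combination (-exp (-b * (z + b * (π * I * τ))) * wsigma τ z) * hsigns
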